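/- Suppose λ = (λ_1,…,λ_n) ∈ Γ_k with k ≥ 1 and λ_1 < 0. Then σ_m(λ|1) ≥ σ_m(λ) for every m = 0, 1, …, k. Moreover, for every 0 ≤ l < k, ∂[σ_k(λ)/σ_l(λ)]/∂λ_1 ≥ (n/k)·((k−l)/(n−l))·(1/(n−k+1))·Σ_{i=1}^n ∂[σ_k(λ)/σ_l(λ)]/∂λ_i. -/

import Mathlib

open Finset Set

noncomputable section

/-- `sigmaV m lam`: the m-th elementary symmetric function σ_m(λ) (σ_0 = 1). -/
def sigmaV {n : ℕ} (m : ℕ) (lam : Fin n → ℝ) : ℝ :=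
  ∑ s ∈ Finset.powersetCard m Finset.univ, ∏ i ∈ s, lam i

/-- σ_m(λ|i): σ_m of the vector λ with the i-th entry set to zero. -/
def sigmaVd {n : ℕ} (m : ℕ) (i : Fin n) (lam : Fin n → ℝ) : ℝ :=
  sigmaV m (Function.update lam i 0)

/-- The Gårding cone Γ_k : σ_m(λ) > 0 for all 1 ≤ m ≤ k. -/
def GammaV {n : ℕ} (k : ℕ) (lam : Fin n → ℝ) : Prop :=
  ∀ m, 1 ≤ m → m ≤ k → 0 < sigmaV m lam

/-- σ_m of a matrix: the sum of its m×m principal minors (equivalently, the m-th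
elementary symmetric function σ_m(λ(A)) of its eigenvalues). -/
def sigmaM {n : ℕ} (m : ℕ) (A : Fin n → Fin n → ℝ) : ℝ :=
  ∑ s ∈ Finset.powersetCard m Finset.univ,
    Matrix.det ((Matrix.of A).submatrix (fun i : ↥s => i.1) (fun i : ↥s => i.1))

/-- λ(A) ∈ Γ_k, expressed via principal minors: σ_m(A) > 0 for all 1 ≤ m ≤ k. -/
def GammaM {n : ℕ} (k : ℕ) (A : Fin n → Fin n → ℝ) : Prop :=
  ∀ m, 1 ≤ m → m ≤ k → 0 < sigmaM m A

/-- Partial derivative ∂u/∂x_i. -/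
def pd {n : ℕ} (i : Fin n) (u : (Fin n → ℝ) → ℝ) : (Fin n → ℝ) → ℝ :=
  fun x => fderiv ℝ u x (Pi.single i 1)

/-- The gradient Du. -/
def gradV {n : ℕ} (u : (Fin n → ℝ) → ℝ) (x : Fin n → ℝ) : Fin n → ℝ :=
  fun i => pd i u x

/-- The Hessian D²u. -/
def hessM {n : ℕ} (u : (Fin n → ℝ) → ℝ) (x : Fin n → ℝ) : Fin n → Fin n → ℝ :=
  fun i j => pd j (pd i u) x

/-- Euclidean inner product. -/
def dotV {n : ℕ} (a b : Fin n → ℝ) : ℝ := ∑ i, a i * b i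

/-- Euclidean norm. -/
def normV {n : ℕ} (a : Fin n → ℝ) : ℝ := Real.sqrt (dotV a a)

/-- Frobenius norm of a matrix (used for |D²u|). -/
def normM {n : ℕ} (A : Fin n → Fin n → ℝ) : ℝ := Real.sqrt (∑ i, ∑ j, (A i j)^2)

/-- `ν` is the outer unit normal to the convex domain Ω at the boundary point x:
the unit vector with ⟨y − x, ν⟩ ≤ 0 for all y ∈ closure Ω. -/
def IsOuterNormalAt {n : ℕ} (Ω : Set (Fin n → ℝ)) (x ν : Fin n → ℝ) : Prop :=
  normV ν = 1 ∧ ∀ y ∈ closure Ω, dotV (y - x) ν ≤ 0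

/-- Ω is a domain of boundary regularity Cᵐ: it is the sublevel set of a Cᵐ defining
function whose gradient does not vanish on the boundary. -/
def BoundaryRegular {n : ℕ} (Ω : Set (Fin n → ℝ)) (m : WithTop ℕ∞) : Prop :=
  ∃ ρ : (Fin n → ℝ) → ℝ, ContDiff ℝ m ρ ∧ Ω = {x | ρ x < 0} ∧
    frontier Ω = {x | ρ x = 0} ∧ ∀ x ∈ frontier Ω, gradV ρ x ≠ 0

/-- Euclidean distance d(x) = dist(x, ∂Ω). -/
def distBd {n : ℕ} (Ω : Set (Fin n → ℝ)) (x : Fin n → ℝ) : ℝ :=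
  sInf ((fun y => normV (x - y)) '' frontier Ω)

/-- The collar Ω_μ = {x ∈ Ω : dist(x, ∂Ω) < μ}. -/
def collar {n : ℕ} (Ω : Set (Fin n → ℝ)) (μ : ℝ) : Set (Fin n → ℝ) :=
  {x ∈ Ω | distBd Ω x < μ}

/-- The quadratic form A(v,v) = Σ_{ij} A_{ij} v_i v_j. -/
def quadF {n : ℕ} (A : Fin n → Fin n → ℝ) (v : Fin n → ℝ) : ℝ :=
  ∑ i, ∑ j, A i j * v i * v j

/-- Time derivative u_t(x,t). -/
def ut {n : ℕ} (u : ℝ → (Fin n → ℝ) → ℝ) (x : Fin n → ℝ) (t : ℝ) : ℝ :=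
  deriv (fun s => u s x) t

/-- ∂[σ_k(λ)/σ_l(λ)]/∂λ_i, via the explicit formula
(σ_{k−1}(λ|i)σ_l(λ) − σ_k(λ)σ_{l−1}(λ|i))/σ_l(λ)², with σ_{−1} := 0. -/
def dQuotV {n : ℕ} (k l : ℕ) (i : Fin n) (lam : Fin n → ℝ) : ℝ :=
  (sigmaVd (k-1) i lam * sigmaV l lam
    - sigmaV k lam * (if l = 0 then 0 else sigmaVd (l-1) i lam)) / (sigmaV l lam)^2

/-- σ_m(A|i): σ_m of the matrix A with the i-th row and column deleted, i.e. the sum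
of the m×m principal minors avoiding index i. -/
def sigmaMd {n : ℕ} (m : ℕ) (i : Fin n) (A : Fin n → Fin n → ℝ) : ℝ :=
  ∑ s ∈ (Finset.powersetCard m Finset.univ).filter (fun s => i ∉ s),
    Matrix.det ((Matrix.of A).submatrix (fun j : ↥s => j.1) (fun j : ↥s => j.1))

/-- ∂[σ_k(A)/σ_l(A)]/∂a_{ii}, via ∂σ_m(A)/∂a_{ii} = σ_{m−1}(A|i) (σ_{−1} := 0):
(σ_{k−1}(A|i)σ_l(A) − σ_k(A)σ_{l−1}(A|i))/σ_l(A)². -/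
def dQuotM {n : ℕ} (k l : ℕ) (i : Fin n) (A : Fin n → Fin n → ℝ) : ℝ :=
  (sigmaMd (k-1) i A * sigmaM l A
    - sigmaM k A * (if l = 0 then 0 else sigmaMd (l-1) i A)) / (sigmaM l A)^2

/-- F^{ij}: the derivative of B ↦ log(σ_k(B)/σ_l(B)) at A in the matrix direction
E_{ij} (the derivative of log(σ_k/σ_l) with respect to the (i,j) entry). -/
def Fcoef {n : ℕ} (k l : ℕ) (i j : Fin n) (A : Fin n → Fin n → ℝ) : ℝ :=
  fderiv ℝ (fun B : Fin n → Fin n → ℝ => Real.log (sigmaM k B / sigmaM l B)) A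
    (Pi.single i (Pi.single j 1))

end


/-!
Write `a_m = σ_m(λ|1)` and `b_m = σ_m(λ)`. Since `b_m = a_m + λ_1 a_{m-1}` and `λ_1 < 0`,
induction on `m` gives `a_m > 0` and `b_m ≤ a_m` for `m ≤ k`. Summing `σ_{m-1}(λ|i)` over `i`
gives `(n - m + 1) b_{m-1}`, so after dropping a nonnegative term the second claim reduces to
`k (n - l) a_k a_{l-1} ≤ l (n - k) a_{k-1} a_l`. This is the monotonicity of the ratios
`E_{m+1} / E_m` of the means `E_m = a_m / C(n - 1, m)`, i.e. Newton's inequalities for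
`λ_2, …, λ_n`.

Newton's inequality `E_j E_{j+2} ≤ E_{j+1}^2` for the means of `N` real numbers: by Rolle's
theorem the derivative of `∏ (X - r)` has `N - 1` real roots with the same `E_0, …, E_{N-1}`, so
we may take `N = j + 2`. Inverting the roots turns `E_j, E_{j+1}, E_{j+2}` into
`P E_2, P E_1, P E_0` with `P` their product, and `E_2 ≤ E_1^2` reduces in the same way to two
numbers, where it is `x y ≤ ((x + y) / 2)^2`.
-/

open Polynomial

theorem mul_succ_le_succ_mul_of_mul_le_sq {x : ℕ → ℝ} {K : ℕ} (hpos : ∀ m ≤ K, 0 < x m)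
    (hx : ∀ j, j + 2 ≤ K → x j * x (j + 2) ≤ x (j + 1) ^ 2) {i j : ℕ} (hij : i ≤ j)
    (hjK : j + 1 ≤ K) : x i * x (j + 1) ≤ x (i + 1) * x j := by
  induction j, hij using Nat.le_induction with
  | base => rw [mul_comm]
  | succ j hij ih =>
    have h1 := hpos (j + 1) (by omega)
    have h2 := hpos (j + 2) hjK
    have h3 := hpos (i + 1) (by omega)
    refine le_of_mul_le_mul_right ?_ h1
    calc x i * x (j + 1 + 1) * x (j + 1) = x i * x (j + 1) * x (j + 2) := by ring
      _ ≤ x (i + 1) * x j * x (j + 2) := mul_le_mul_of_nonneg_right (ih (by omega)) h2.le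
      _ ≤ x (i + 1) * x (j + 1) ^ 2 := by
        rw [mul_assoc]; exact mul_le_mul_of_nonneg_left (hx j hjK) h3.le
      _ = x (i + 1) * x (j + 1) * x (j + 1) := by ring

theorem Polynomial.card_roots_derivative {p : ℝ[X]} (hp : Multiset.card p.roots = p.natDegree) :
    Multiset.card (derivative p).roots = (derivative p).natDegree := by
  refine le_antisymm (card_roots' _) ?_
  have := card_roots_le_derivative p
  rw [natDegree_derivative]
  omega

theorem Polynomial.esymm_roots_derivative {p : ℝ[X]} (hmonic : p.Monic)
    (hp : Multiset.card p.roots = p.natDegree) {m : ℕ} (hm : m < p.natDegree) :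
    p.natDegree * (derivative p).roots.esymm m = (p.natDegree - m : ℕ) * p.roots.esymm m := by
  obtain ⟨N, hN⟩ : ∃ N, p.natDegree = N + 1 := ⟨p.natDegree - 1, by omega⟩
  have hp' := card_roots_derivative hp
  have hdeg' : (derivative p).natDegree = N := by simp [hN]
  -- compare the coefficients of `X ^ (N - m)` in `derivative p` via Vieta's formulas
  have hcoeff := coeff_eq_esymm_roots_of_card hp (k := N - m + 1) (by omega)
  have hcoeff' := coeff_eq_esymm_roots_of_card hp' (k := N - m) (by omega)
  rw [coeff_derivative, hcoeff, hmonic.leadingCoeff, leadingCoeff_derivative, hmonic.leadingCoeff,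
    hdeg', hN, show N + 1 - (N - m + 1) = m by omega, show N - (N - m) = m by omega] at hcoeff'
  rw [hN, show N + 1 - m = N - m + 1 by omega]
  push_cast at hcoeff' ⊢
  have hsign : ((-1 : ℝ) ^ m) ^ 2 = 1 := by rw [← pow_mul, mul_comm, pow_mul]; norm_num
  linear_combination -(-1) ^ m * hcoeff'
    - ((N + 1) * (derivative p).roots.esymm m - ((N - m : ℕ) + 1) * p.roots.esymm m) * hsign

namespace Multiset

section CommSemiring

variable {R : Type*} [CommSemiring R]

theorem esymm_zero_right (s : Multiset R) : s.esymm 0 = 1 := by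
  simp [esymm, powersetCard_zero_left]

theorem esymm_card (s : Multiset R) : s.esymm (card s) = s.prod := by
  simp [esymm, powersetCard_self]

theorem esymm_eq_zero_of_card_lt {s : Multiset R} {m : ℕ} (h : card s < m) : s.esymm m = 0 := by
  simp [esymm, powersetCard_eq_empty _ h]

theorem esymm_cons_succ (a : R) (s : Multiset R) (m : ℕ) :
    (a ::ₘ s).esymm (m + 1) = s.esymm (m + 1) + a * s.esymm m := by
  simp [esymm, powersetCard_cons, map_map, sum_map_mul_left]

theorem esymm_zero_cons (s : Multiset R) (m : ℕ) : (0 ::ₘ s).esymm m = s.esymm m := by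
  cases m with
  | zero => simp only [esymm_zero_right]
  | succ m => rw [esymm_cons_succ, zero_mul, add_zero]

end CommSemiring

theorem esymm_eq_prod_mul_esymm_inv {K : Type*} [Field K] {s : Multiset K} (hs : (0 : K) ∉ s)
    {i j : ℕ} (hij : i + j = card s) : s.esymm i = s.prod * (s.map (·⁻¹)).esymm j := by
  induction s using Multiset.induction generalizing i j with
  | empty => simp_all [esymm_zero_right]
  | cons a s ih =>
    have ha : a ≠ 0 := fun h => hs (h ▸ mem_cons_self a s)
    have hs' : (0 : K) ∉ s := fun h => hs (mem_cons_of_mem h)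
    rw [card_cons] at hij
    rcases j with _ | j
    · rw [add_zero] at hij
      rw [hij, ← card_cons, esymm_card, esymm_zero_right, mul_one]
    rcases i with _ | i
    · have hcard : card ((a ::ₘ s).map (·⁻¹)) = j + 1 := by
        rw [card_map, card_cons]; omega
      rw [esymm_zero_right, ← hcard, esymm_card, prod_map_inv, map_id',
        mul_inv_cancel₀ (prod_ne_zero hs)]
    · rw [map_cons, esymm_cons_succ, esymm_cons_succ, prod_cons,
        ih hs' (i := i + 1) (j := j) (by omega), ih hs' (i := i) (j := j + 1) (by omega)]
      field_simp
      ring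

noncomputable def esymmMean (s : Multiset ℝ) (m : ℕ) : ℝ :=
  s.esymm m / ((card s).choose m : ℝ)

theorem esymmMean_zero (s : Multiset ℝ) : s.esymmMean 0 = 1 := by
  simp [esymmMean, esymm_zero_right]

theorem esymmMean_eq_prod_mul_esymmMean_inv {s : Multiset ℝ} (hs : (0 : ℝ) ∉ s) {i j : ℕ}
    (hij : i + j = card s) : s.esymmMean i = s.prod * (s.map (·⁻¹)).esymmMean j := by
  rw [esymmMean, esymmMean, esymm_eq_prod_mul_esymm_inv hs hij, card_map, ← hij,
    Nat.choose_symm_add, mul_div_assoc]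

theorem exists_card_eq_esymmMean_eq_of_card_eq_succ {s : Multiset ℝ} {N : ℕ}
    (hs : card s = N + 1) :
    ∃ t : Multiset ℝ, card t = N ∧ ∀ m ≤ N, t.esymmMean m = s.esymmMean m := by
  set p : ℝ[X] := (s.map fun a => X - C a).prod
  have hmonic : p.Monic := monic_multiset_prod_of_monic _ _ fun a _ => monic_X_sub_C a
  have hroots : p.roots = s := roots_multiset_prod_X_sub_C s
  have hdeg : p.natDegree = N + 1 := by rw [natDegree_multiset_prod_X_sub_C_eq_card, hs]
  have hsplit : card p.roots = p.natDegree := by rw [hroots, hdeg, hs]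
  have hcard : card (derivative p).roots = N := by
    rw [card_roots_derivative hsplit, natDegree_derivative, hdeg, Nat.add_sub_cancel]
  refine ⟨(derivative p).roots, hcard, fun m hm => ?_⟩
  have hrel := esymm_roots_derivative hmonic hsplit (m := m) (by omega)
  rw [hroots, hdeg] at hrel
  have hchoose : (N.choose m : ℝ) * (N + 1 : ℕ) = (N + 1).choose m * (N + 1 - m : ℕ) := by
    exact_mod_cast Nat.choose_mul_succ_eq N m
  have hC : (0 : ℝ) < (N + 1).choose m := by exact_mod_cast Nat.choose_pos (by omega)
  have hC' : (0 : ℝ) < N.choose m := by exact_mod_cast Nat.choose_pos hm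
  have hNm : (0 : ℝ) < (N + 1 - m : ℕ) := by exact_mod_cast (by omega : 0 < N + 1 - m)
  rw [esymmMean, esymmMean, hcard, hs, div_eq_div_iff hC'.ne' hC.ne']
  refine mul_right_cancel₀ hNm.ne' ?_
  linear_combination (derivative p).roots.esymm m * hchoose.symm + (N.choose m : ℝ) * hrel

theorem exists_card_eq_esymmMean_eq {s : Multiset ℝ} {d : ℕ} (hd : d ≤ card s) :
    ∃ t : Multiset ℝ, card t = d ∧ ∀ m ≤ d, t.esymmMean m = s.esymmMean m := by
  suffices ∀ N, d ≤ N → ∀ s : Multiset ℝ, card s = N →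
      ∃ t : Multiset ℝ, card t = d ∧ ∀ m ≤ d, t.esymmMean m = s.esymmMean m from
    this _ hd s rfl
  intro N hdN
  induction N, hdN using Nat.le_induction with
  | base => exact fun s hs => ⟨s, hs, fun _ _ => rfl⟩
  | succ N hdN ih =>
    intro s hs
    obtain ⟨t, ht, hts⟩ := exists_card_eq_esymmMean_eq_of_card_eq_succ hs
    obtain ⟨r, hr, hrt⟩ := ih t ht
    exact ⟨r, hr, fun m hm => (hrt m hm).trans (hts m (hm.trans hdN))⟩

theorem esymmMean_two_le_sq {s : Multiset ℝ} (hs : 2 ≤ card s) :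
    s.esymmMean 2 ≤ s.esymmMean 1 ^ 2 := by
  obtain ⟨t, ht, hts⟩ := exists_card_eq_esymmMean_eq hs
  obtain ⟨x, y, rfl⟩ := card_eq_two.mp ht
  rw [← hts 1 (by norm_num), ← hts 2 le_rfl]
  simp only [esymmMean, insert_eq_cons, esymm_pair_one, esymm_pair_two, card_cons,
    card_singleton, Nat.reduceAdd, Nat.choose_self, Nat.choose_succ_self_right, Nat.cast_one,
    Nat.cast_ofNat, div_one]
  nlinarith [sq_nonneg (x - y)]

theorem esymmMean_mul_le_sq_of_card_eq {s : Multiset ℝ} {j : ℕ} (hs : card s = j + 2) :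
    s.esymmMean j * s.esymmMean (j + 2) ≤ s.esymmMean (j + 1) ^ 2 := by
  by_cases h0 : (0 : ℝ) ∈ s
  · have : s.esymmMean (j + 2) = 0 := by
      rw [esymmMean, ← hs, esymm_card, prod_eq_zero h0, zero_div]
    rw [this, mul_zero]
    positivity
  · have e := fun i k (h : i + k = card s) => esymmMean_eq_prod_mul_esymmMean_inv h0 h
    rw [e j 2 hs.symm, e (j + 1) 1 (by omega), e (j + 2) 0 (by omega), esymmMean_zero]
    have := esymmMean_two_le_sq (s := s.map (·⁻¹)) (by simp [hs])
    nlinarith [sq_nonneg s.prod]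

theorem esymmMean_mul_le_sq {s : Multiset ℝ} {j : ℕ} (hj : j + 2 ≤ card s) :
    s.esymmMean j * s.esymmMean (j + 2) ≤ s.esymmMean (j + 1) ^ 2 := by
  obtain ⟨t, ht, hts⟩ := exists_card_eq_esymmMean_eq hj
  rw [← hts j (by omega), ← hts (j + 1) (by omega), ← hts (j + 2) le_rfl]
  exact esymmMean_mul_le_sq_of_card_eq ht

theorem esymm_mul_esymm_succ_le {s : Multiset ℝ} {i j : ℕ} (hij : i ≤ j)
    (hj : j + 1 ≤ card s) (hpos : ∀ m ≤ j + 1, 0 < s.esymm m) :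
    (j + 1) * (card s - i) * (s.esymm i * s.esymm (j + 1))
      ≤ (i + 1) * (card s - j) * (s.esymm (i + 1) * s.esymm j) := by
  have hC : ∀ m ≤ card s, (0 : ℝ) < (card s).choose m := fun m hm => by
    exact_mod_cast Nat.choose_pos hm
  have hchoose : ∀ m < card s,
      ((card s).choose (m + 1) : ℝ) * (m + 1) = (card s).choose m * (card s - m) :=
    fun m hm => by rw [← Nat.cast_sub hm.le]; exact_mod_cast Nat.choose_succ_right_eq _ m
  have hmean := mul_succ_le_succ_mul_of_mul_le_sq (x := s.esymmMean) (K := j + 1)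
    (fun m hm => div_pos (hpos m hm) (hC m (by omega)))
    (fun m hm => esymmMean_mul_le_sq (by omega)) hij le_rfl
  simp only [esymmMean] at hmean
  have hCi := hC i (by omega)
  have hCj := hC j (by omega)
  rw [div_mul_div_comm, div_mul_div_comm, div_le_div_iff₀ (mul_pos hCi (hC _ hj))
    (mul_pos (hC _ (by omega)) hCj)] at hmean
  refine le_of_mul_le_mul_right ?_ (mul_pos hCi hCj)
  linear_combination ((i : ℝ) + 1) * (j + 1) * hmean
    + (s.esymm i * s.esymm (j + 1)) * (j + 1) * (card s).choose j * (hchoose i (by omega)).symm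
    - (s.esymm (i + 1) * s.esymm j) * (i + 1) * (card s).choose i * (hchoose j (by omega)).symm

end Multiset

section SymmetricFunctions

variable {n : ℕ}

theorem univ_val_eq_cons_erase (i : Fin n) :
    (univ : Finset (Fin n)).val = i ::ₘ (univ.erase i).val := by
  rw [Finset.erase_val, Multiset.cons_erase (Finset.mem_univ i)]

theorem card_map_univ_erase_val (i : Fin n) (f : Fin n → ℝ) :
    Multiset.card ((univ.erase i).val.map f) = n - 1 := by
  simp

theorem sigmaV_eq_esymm (m : ℕ) (f : Fin n → ℝ) : sigmaV m f = (univ.val.map f).esymm m := by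
  rw [Finset.esymm_map_val]; rfl

theorem sigmaVd_eq_esymm (m : ℕ) (i : Fin n) (f : Fin n → ℝ) :
    sigmaVd m i f = ((univ.erase i).val.map f).esymm m := by
  rw [sigmaVd, sigmaV_eq_esymm, univ_val_eq_cons_erase i, Multiset.map_cons,
    Function.update_self, Multiset.esymm_zero_cons]
  congr 1
  refine Multiset.map_congr rfl fun j hj => Function.update_of_ne ?_ _ _
  exact Finset.ne_of_mem_erase (Finset.mem_val.mp hj)

theorem sigmaV_zero (f : Fin n → ℝ) : sigmaV 0 f = 1 := by
  simp [sigmaV]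

theorem sigmaV_eq_sigmaVd_add (m : ℕ) (i : Fin n) (f : Fin n → ℝ) :
    sigmaV m f = sigmaVd m i f + f i * (if m = 0 then 0 else sigmaVd (m - 1) i f) := by
  rcases m with _ | m
  · simp [sigmaV_zero, sigmaVd]
  · rw [sigmaV_eq_esymm, univ_val_eq_cons_erase i, Multiset.map_cons, Multiset.esymm_cons_succ,
      sigmaVd_eq_esymm, sigmaVd_eq_esymm]
    simp

theorem sum_sigmaVd {m : ℕ} (hm : m ≤ n) (f : Fin n → ℝ) :
    ∑ i, sigmaVd m i f = (n - m) * sigmaV m f := by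
  simp only [sigmaVd_eq_esymm, Finset.esymm_map_val]
  rw [Finset.sum_comm' (t' := powersetCard m univ) (s' := fun s => sᶜ)]
  · rw [sigmaV, Finset.mul_sum]
    refine Finset.sum_congr rfl fun s hs => ?_
    rw [Finset.sum_const, nsmul_eq_mul, card_compl, Fintype.card_fin,
      (mem_powersetCard.mp hs).2, Nat.cast_sub hm]
  · intro i s
    simp [mem_powersetCard, subset_erase]

theorem sum_dQuotV {k l : ℕ} (hk : 1 ≤ k) (hkn : k ≤ n + 1) (hln : l ≤ n + 1)
    (f : Fin n → ℝ) :
    ∑ i, dQuotV k l i f = ((n - k + 1) * sigmaV (k - 1) f * sigmaV l f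
      - (n - l + 1) * sigmaV k f * (if l = 0 then 0 else sigmaV (l - 1) f)) / sigmaV l f ^ 2 := by
  have hsum : ∀ m, 1 ≤ m → m ≤ n + 1 →
      ∑ i, sigmaVd (m - 1) i f = (n - m + 1) * sigmaV (m - 1) f := fun m hm hmn => by
    rw [sum_sigmaVd (by omega), Nat.cast_sub hm]; ring
  simp only [dQuotV, ← Finset.sum_div, Finset.sum_sub_distrib, ← Finset.sum_mul,
    ← Finset.mul_sum, hsum k hk hkn]
  split_ifs with hl
  · simp
  · rw [hsum l (by omega) hln]; ring

end SymmetricFunctions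

namespace GammaV

variable {n k : ℕ} {f : Fin n → ℝ}

theorem sigmaV_pos (hf : GammaV k f) {m : ℕ} (hm : m ≤ k) : 0 < sigmaV m f := by
  rcases Nat.eq_zero_or_pos m with rfl | hm0
  · rw [sigmaV_zero]; exact one_pos
  · exact hf m hm0 hm

theorem sigmaVd_pos (hf : GammaV k f) {i : Fin n} (hi : f i < 0) {m : ℕ} (hm : m ≤ k) :
    0 < sigmaVd m i f := by
  induction m with
  | zero => simp [sigmaVd, sigmaV_zero]
  | succ m ih =>
    have := sigmaV_eq_sigmaVd_add (m + 1) i f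
    simp only [add_tsub_cancel_right, if_neg (Nat.succ_ne_zero m)] at this
    nlinarith [hf.sigmaV_pos hm, ih (by omega)]

theorem sigmaV_le_sigmaVd (hf : GammaV k f) {i : Fin n} (hi : f i < 0) {m : ℕ} (hm : m ≤ k) :
    sigmaV m f ≤ sigmaVd m i f := by
  rw [sigmaV_eq_sigmaVd_add m i f]
  split_ifs
  · simp
  · nlinarith [hf.sigmaVd_pos hi (m := m - 1) (by omega)]

theorem lt_of_neg (hf : GammaV k f) {i : Fin n} (hi : f i < 0) : k < n := by
  have hpos := hf.sigmaVd_pos hi le_rfl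
  rw [sigmaVd_eq_esymm] at hpos
  by_contra! h
  have := i.pos
  rw [Multiset.esymm_eq_zero_of_card_lt (by rw [card_map_univ_erase_val]; omega)] at hpos
  exact lt_irrefl 0 hpos

theorem newton_sigmaVd (hf : GammaV k f) {i : Fin n} (hi : f i < 0) {l : ℕ} (hl : l < k) :
    k * (n - l) * (sigmaVd k i f * (if l = 0 then 0 else sigmaVd (l - 1) i f))
      ≤ l * (n - k) * (sigmaVd (k - 1) i f * sigmaVd l i f) := by
  split_ifs with hl0
  · subst hl0; simp
  have hkn := hf.lt_of_neg hi
  have hcard := card_map_univ_erase_val i f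
  have := Multiset.esymm_mul_esymm_succ_le (s := (univ.erase i).val.map f) (i := l - 1)
    (j := k - 1) (by omega) (by omega) fun m hm => by
      rw [← sigmaVd_eq_esymm]; exact hf.sigmaVd_pos hi (by omega)
  simp only [← sigmaVd_eq_esymm, hcard, Nat.sub_add_cancel (by omega : 1 ≤ k),
    Nat.sub_add_cancel (by omega : 1 ≤ l)] at this
  push_cast [Nat.cast_sub (by omega : 1 ≤ n), Nat.cast_sub (by omega : 1 ≤ k),
    Nat.cast_sub (by omega : 1 ≤ l)] at this
  linear_combination this

end GammaV

theorem quotient_numerator_le {n k l a₁ b₁ a b ak bk A B t : ℝ}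
    (hl : 0 ≤ l) (hlk : l < k) (hkn : k < n)
    (hb₁ : 0 ≤ b₁) (hb₁a : b₁ ≤ a₁) (hb : 0 ≤ b) (hba : b ≤ a) (hbk : 0 ≤ bk) (hB : 0 ≤ B)
    (hnewton : k * (n - l) * (ak * A) ≤ l * (n - k) * (a₁ * a))
    (hk_rec : bk = ak + t * a₁) (hl_rec : b = a + t * A) :
    n / k * ((k - l) / (n - l)) * (1 / (n - k + 1))
        * ((n - k + 1) * b₁ * b - (n - l + 1) * bk * B) ≤ a₁ * b - bk * A := by
  have hk : 0 < k := hl.trans_lt hlk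
  have hnl : 0 < n - l := by linarith
  have hnk : 0 < n - k + 1 := by linarith
  set c := n / k * ((k - l) / (n - l)) * (1 / (n - k + 1)) with hc_def
  have hc : 0 ≤ c :=
    mul_nonneg (mul_nonneg (by positivity [hk.trans hkn]) (div_nonneg (by linarith) hnl.le))
      (one_div_nonneg.mpr hnk.le)
  have hB' : 0 ≤ (n - l + 1) * bk * B := mul_nonneg (mul_nonneg (by linarith) hbk) hB
  calc c * ((n - k + 1) * b₁ * b - (n - l + 1) * bk * B)
      ≤ c * ((n - k + 1) * (a₁ * a)) := by
        gcongr
        nlinarith [mul_le_mul hb₁a hba hb (hb₁.trans hb₁a)]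
    _ = n * (k - l) / (k * (n - l)) * (a₁ * a) := by rw [hc_def]; field_simp [hnk.ne']
    _ ≤ a₁ * a - ak * A := by
        rw [div_mul_eq_mul_div, div_le_iff₀ (by positivity)]
        nlinarith
    _ = a₁ * b - bk * A := by rw [hk_rec, hl_rec]; ring

/-- Lemma 2.4: if λ ∈ Γ_k (k ≥ 1) and λ_1 < 0, then σ_m(λ|1) ≥ σ_m(λ)
for all 0 ≤ m ≤ k, and for all 0 ≤ l < k,
∂[σ_k/σ_l]/∂λ_1 ≥ (n/k)·((k−l)/(n−l))·(1/(n−k+1))·Σ_i ∂[σ_k/σ_l]/∂λ_i. -/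
theorem statement_17 (n k : ℕ) (hk : 1 ≤ k) (hkn : k ≤ n)
    (lam : Fin n → ℝ) (hΓ : GammaV k lam)
    (h1 : lam (⟨0, by omega⟩ : Fin n) < 0) :
    (∀ m, m ≤ k → sigmaV m lam ≤ sigmaVd m (⟨0, by omega⟩ : Fin n) lam) ∧
    (∀ l, l < k →
      (n : ℝ) / (k : ℝ) * (((k : ℝ) - (l : ℝ)) / ((n : ℝ) - (l : ℝ)))
          * (1 / ((n : ℝ) - (k : ℝ) + 1)) * (∑ i, dQuotV k l i lam)
        ≤ dQuotV k l (⟨0, by omega⟩ : Fin n) lam) := by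
  set i₀ : Fin n := ⟨0, by omega⟩
  refine ⟨fun m hm => hΓ.sigmaV_le_sigmaVd h1 hm, fun l hl => ?_⟩
  have hkn' := hΓ.lt_of_neg h1
  have hσl := hΓ.sigmaV_pos hl.le
  have hk_rec := sigmaV_eq_sigmaVd_add k i₀ lam
  rw [if_neg (by omega)] at hk_rec
  rw [sum_dQuotV hk (by omega) (by omega), dQuotV, mul_div_assoc',
    div_le_div_iff_of_pos_right (by positivity)]
  refine quotient_numerator_le (Nat.cast_nonneg l) (by exact_mod_cast hl)
    (by exact_mod_cast hkn')
    (hΓ.sigmaV_pos (by omega)).le (hΓ.sigmaV_le_sigmaVd h1 (by omega)) hσl.le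
    (hΓ.sigmaV_le_sigmaVd h1 hl.le) (hΓ.sigmaV_pos le_rfl).le ?_ (hΓ.newton_sigmaVd h1 hl)
    hk_rec (sigmaV_eq_sigmaVd_add l i₀ lam)
  split_ifs
  exacts [le_rfl, (hΓ.sigmaV_pos (by omega)).le]
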